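/- Let N, d ≥ 1, let {R_k}_{k≥1} be N×N row-stochastic matrices, and let {v_k}_{k≥1} be vectors in ℝ^N with strictly positive entries, ∑_{i=1}^N (v_k)_i = N, and v_kᵀ = v_{k+1}ᵀ R_k for all k. Write Φ_R(k,s) = R_k R_{k−1}⋯R_s for k ≥ s and suppose there exist C₁ > 0 and ρ ∈ (0,1) with ‖Φ_R(k,s) − (1/N) 1_N v_sᵀ‖ ≤ C₁ ρ^{k−s} for all k ≥ s ≥ 1 (Frobenius norm). Let {s^k}_{k≥1} ⊆ ℝ^{N×d} satisfy s^{k+1} = R_k s^k + δ^k where ‖δ^k‖ ≤ C̃ for all k, and suppose ‖(1/N) v_kᵀ s^k‖ ≤ D for all k. Then there exists a constant M > 0 such that ‖s^k‖ ≤ M for all k ≥ 1. -/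

import Mathlib

/-- Frobenius norm of a real matrix. -/
noncomputable def frobNorm {ι κ : Type*} [Fintype ι] [Fintype κ]
    (M : ι → κ → ℝ) : ℝ :=
  Real.sqrt (∑ i, ∑ j, (M i j) ^ 2)

/-- Euclidean norm of a real vector. -/
noncomputable def vecNorm {κ : Type*} [Fintype κ] (x : κ → ℝ) : ℝ :=
  Real.sqrt (∑ j, (x j) ^ 2)

/-- `PhiR R s t` is the backward matrix product Φ_R(s+t, s) = R(s+t)⋯R(s). -/
def PhiR {N : ℕ} (R : ℕ → Matrix (Fin N) (Fin N) ℝ) (s : ℕ) :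
    ℕ → Matrix (Fin N) (Fin N) ℝ
  | 0 => R s
  | t + 1 => R (s + t + 1) * PhiR R s t

/-!
Write `Q_k = (1/N) 1_N v_kᵀ`. Since `R_k` is row-stochastic and `v_kᵀ = v_{k+1}ᵀ R_k`, we have
`R_k Q_k = Q_k` and `Q_{k+1} R_k = Q_k`, so the deviation from the weighted average
`y^k = s^k - Q_k s^k` obeys `y^{k+1} = R_k y^k + E^k` with `E^k = δ^k - Q_{k+1} δ^k`.
Both `y^k` and `E^{k-1}` are annihilated by `Q_k`, so on them `Φ_R(k, s)` acts as
`Φ_R(k, s) - Q_s`, which is geometrically small. Unrolling the recursion bounds `y^k` by a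
geometric series, and `Q_k s^k` is bounded by the hypothesis on the weighted averages.
-/

open Finset
open scoped Matrix.Norms.Frobenius

section Norms

variable {ι κ : Type*} [Fintype ι] [Fintype κ]

lemma frobNorm_eq_norm (M : Matrix ι κ ℝ) : frobNorm M = ‖M‖ := by
  unfold frobNorm
  rw [Matrix.frobenius_norm_def, Real.sqrt_eq_rpow]
  simp only [Real.norm_eq_abs, Real.rpow_two, sq_abs]

lemma frobNorm_const_rows (g : κ → ℝ) :
    frobNorm (fun (_ : ι) c => g c) = √(Fintype.card ι) * vecNorm g := by
  rw [frobNorm, vecNorm, ← Real.sqrt_mul (by positivity), sum_const, card_univ, nsmul_eq_mul]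

lemma vecNorm_le_sum_of_nonneg {g : κ → ℝ} (hg : ∀ j, 0 ≤ g j) :
    vecNorm g ≤ ∑ j, g j :=
  (Real.sqrt_le_sqrt (sum_sq_le_sq_sum_of_nonneg fun j _ => hg j)).trans_eq
    (Real.sqrt_sq (sum_nonneg fun j _ => hg j))

lemma norm_mul_le_of_mul_eq_zero {μ : Type*} [Fintype μ] (P Q : Matrix ι κ ℝ)
    (X : Matrix κ μ ℝ) (h : Q * X = 0) : ‖P * X‖ ≤ ‖P - Q‖ * ‖X‖ := by
  rw [← sub_zero (P * X), ← h, ← Matrix.sub_mul]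
  exact Matrix.frobenius_norm_mul _ _

end Norms

section Averaging

variable {N : ℕ} {κ : Type*} {v : Fin N → ℝ}

noncomputable def avgMat (v : Fin N → ℝ) : Matrix (Fin N) (Fin N) ℝ :=
  Matrix.of fun _ j => (1 / (N : ℝ)) * v j

lemma avgMat_mul_apply (v : Fin N → ℝ) (X : Matrix (Fin N) κ ℝ) (i : Fin N) (c : κ) :
    (avgMat v * X) i c = (1 / (N : ℝ)) * ∑ j, v j * X j c := by
  simp only [avgMat, Matrix.mul_apply, Matrix.of_apply, mul_sum, mul_assoc]

lemma norm_avgMat_mul [Fintype κ] (v : Fin N → ℝ) (X : Matrix (Fin N) κ ℝ) :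
    ‖avgMat v * X‖ = √N * vecNorm (fun c => (1 / (N : ℝ)) * ∑ j, v j * X j c) := by
  have h := frobNorm_const_rows (ι := Fin N) fun c => (1 / (N : ℝ)) * ∑ j, v j * X j c
  rw [Fintype.card_fin] at h
  rw [← frobNorm_eq_norm, ← h]
  congr 1
  ext i c
  exact avgMat_mul_apply v X i c

lemma avgMat_mul_avgMat (hv : ∑ i, v i = N) : avgMat v * avgMat v = avgMat v := by
  ext i j
  have hN : (N : ℝ) ≠ 0 := Nat.cast_ne_zero.mpr (Fin.pos i).ne'
  rw [avgMat_mul_apply]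
  simp only [avgMat, Matrix.of_apply, ← sum_mul, hv]
  field_simp

lemma avgMat_mul_sub_self (hv : ∑ i, v i = N) (X : Matrix (Fin N) κ ℝ) :
    avgMat v * (X - avgMat v * X) = 0 := by
  rw [Matrix.mul_sub, ← Matrix.mul_assoc, avgMat_mul_avgMat hv, sub_self]

lemma mul_avgMat_of_sum_row_eq_one {R : Matrix (Fin N) (Fin N) ℝ}
    (hR : ∀ i, ∑ j, R i j = 1) : R * avgMat v = avgMat v := by
  ext i j
  simp only [avgMat, Matrix.mul_apply, Matrix.of_apply, ← sum_mul, hR, one_mul]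

lemma avgMat_mul_of_eq_vecMul {R : Matrix (Fin N) (Fin N) ℝ} {u : Fin N → ℝ}
    (hu : ∀ j, u j = ∑ i, v i * R i j) : avgMat v * R = avgMat u := by
  ext i j
  rw [avgMat_mul_apply]
  simp only [avgMat, Matrix.of_apply, hu]

lemma norm_avgMat_le (hpos : ∀ j, 0 ≤ v j) (hv : ∑ i, v i = N) : ‖avgMat v‖ ≤ √N := by
  rw [← frobNorm_eq_norm]
  refine (frobNorm_const_rows _).trans_le ?_
  rw [Fintype.card_fin]
  refine mul_le_of_le_one_right (Real.sqrt_nonneg _)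
    ((vecNorm_le_sum_of_nonneg fun j => ?_).trans ?_)
  · exact mul_nonneg (by positivity) (hpos j)
  · rw [← mul_sum, hv]
    rcases eq_or_ne (N : ℝ) 0 with hN | hN <;> simp [hN]

lemma norm_sub_avgMat_mul_le [Fintype κ] (hpos : ∀ j, 0 ≤ v j) (hv : ∑ i, v i = N)
    (X : Matrix (Fin N) κ ℝ) : ‖X - avgMat v * X‖ ≤ (1 + √N) * ‖X‖ :=
  calc ‖X - avgMat v * X‖ ≤ ‖X‖ + ‖avgMat v‖ * ‖X‖ :=
        (norm_sub_le _ _).trans (add_le_add_right (Matrix.frobenius_norm_mul _ _) _)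
    _ ≤ (1 + √N) * ‖X‖ := by
        rw [add_mul, one_mul]
        gcongr
        exact norm_avgMat_le hpos hv

end Averaging

lemma sub_mul_self_of_recursion {α n κ : Type*} [Ring α] [Fintype n]
    (R Q Q' : Matrix n n α) (w δ : Matrix n κ α) (hRQ : R * Q = Q) (hQ'R : Q' * R = Q) :
    (R * w + δ) - Q' * (R * w + δ) = R * (w - Q * w) + (δ - Q' * δ) := by
  rw [Matrix.mul_add, ← Matrix.mul_assoc, hQ'R, Matrix.mul_sub, ← Matrix.mul_assoc, hRQ]
  abel

lemma PhiR_succ_of_add_eq {N : ℕ} (R : ℕ → Matrix (Fin N) (Fin N) ℝ) {a m b : ℕ}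
    (h : a + m = b) : PhiR R a (m + 1) = R (b + 1) * PhiR R a m := by
  subst h
  rfl

section Recursion

variable {N : ℕ} {κ : Type*} (R : ℕ → Matrix (Fin N) (Fin N) ℝ)
  (y E : ℕ → Matrix (Fin N) κ ℝ) (s : ℕ)

/-- The forcing term `E (s + t)` stands apart because `PhiR R a 0` is `R a`, not `1`. -/
lemma eq_PhiR_mul_add_sum (hy : ∀ k, s ≤ k → y (k + 1) = R k * y k + E k) (t : ℕ) :
    y (s + t + 1) = PhiR R s t * y s
      + ∑ j ∈ range t, PhiR R (s + j + 1) (t - 1 - j) * E (s + j) + E (s + t) := by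
  induction t with
  | zero =>
    simp only [add_zero, range_zero, sum_empty]
    exact hy s le_rfl
  | succ t ih =>
    have hterm : ∀ j ∈ range t, R (s + t + 1) * (PhiR R (s + j + 1) (t - 1 - j) * E (s + j))
        = PhiR R (s + j + 1) (t + 1 - 1 - j) * E (s + j) := fun j hj => by
      have hj := mem_range.mp hj
      rw [← Matrix.mul_assoc,
        ← PhiR_succ_of_add_eq R (show s + j + 1 + (t - 1 - j) = s + t by omega),
        show t + 1 - 1 - j = t - 1 - j + 1 by omega]
    have hlast : R (s + t + 1) * E (s + t) = PhiR R (s + t + 1) (t + 1 - 1 - t) * E (s + t) := by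
      rw [show t + 1 - 1 - t = 0 by omega]
      rfl
    rw [← add_assoc s t 1, hy _ (by omega), ih, Matrix.mul_add, Matrix.mul_add, Matrix.mul_sum,
      sum_congr rfl hterm, hlast, sum_range_succ, ← Matrix.mul_assoc,
      PhiR_succ_of_add_eq R (rfl : s + t = s + t)]
    abel

lemma sum_range_pow_sub_le {ρ : ℝ} (hρ0 : 0 ≤ ρ) (hρ1 : ρ < 1) (t : ℕ) :
    ∑ j ∈ range t, ρ ^ (t - 1 - j) ≤ 1 / (1 - ρ) := by
  rw [sum_range_reflect (ρ ^ ·) t, range_eq_Ico]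
  simpa using geom_sum_Ico_le_of_lt_one hρ0 hρ1 (m := 0) (n := t)

variable [Fintype κ] (Q : ℕ → Matrix (Fin N) (Fin N) ℝ)

theorem norm_le_of_recursion {C ρ Ebar : ℝ} (hC : 0 ≤ C) (hρ0 : 0 ≤ ρ) (hρ1 : ρ < 1)
    (hPhi : ∀ a m, s ≤ a → ‖PhiR R a m - Q a‖ ≤ C * ρ ^ m)
    (hy : ∀ k, s ≤ k → y (k + 1) = R k * y k + E k)
    (hQy : Q s * y s = 0) (hQE : ∀ k, s ≤ k → Q (k + 1) * E k = 0)
    (hE : ∀ k, s ≤ k → ‖E k‖ ≤ Ebar) (k : ℕ) (hk : s ≤ k) :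
    ‖y k‖ ≤ (1 + C) * ‖y s‖ + (C / (1 - ρ) + 1) * Ebar := by
  have hEbar : 0 ≤ Ebar := (norm_nonneg _).trans (hE s le_rfl)
  have h1ρ : 0 < 1 - ρ := by linarith
  have hcontr : ∀ a m (X : Matrix (Fin N) κ ℝ), s ≤ a → Q a * X = 0 →
      ‖PhiR R a m * X‖ ≤ C * ρ ^ m * ‖X‖ :=
    fun a m X ha hX => (norm_mul_le_of_mul_eq_zero _ _ X hX).trans (by gcongr; exact hPhi a m ha)
  obtain rfl | ⟨t, rfl⟩ : k = s ∨ ∃ t, k = s + t + 1 :=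
    (eq_or_lt_of_le hk).imp Eq.symm fun h => ⟨k - s - 1, by omega⟩
  · have : 0 ≤ C * ‖y k‖ + (C / (1 - ρ) + 1) * Ebar := by positivity
    linarith
  rw [eq_PhiR_mul_add_sum R y E s hy t]
  have hsum :
      ∑ j ∈ range t, ‖PhiR R (s + j + 1) (t - 1 - j) * E (s + j)‖ ≤ C / (1 - ρ) * Ebar :=
    calc _ ≤ ∑ j ∈ range t, C * Ebar * ρ ^ (t - 1 - j) := sum_le_sum fun j _ => by
            refine (hcontr (s + j + 1) _ _ (by omega) (hQE (s + j) (by omega))).trans ?_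
            rw [mul_right_comm]
            gcongr
            exact hE _ (by omega)
      _ ≤ C * Ebar * (1 / (1 - ρ)) := by
            rw [← mul_sum]
            exact mul_le_mul_of_nonneg_left (sum_range_pow_sub_le hρ0 hρ1 t) (by positivity)
      _ = C / (1 - ρ) * Ebar := by ring
  have hfirst : ‖PhiR R s t * y s‖ ≤ C * ‖y s‖ :=
    (hcontr s t _ le_rfl hQy).trans
      (by gcongr; exact mul_le_of_le_one_right hC (pow_le_one₀ hρ0 hρ1.le))
  calc _ ≤ ‖PhiR R s t * y s‖
          + ∑ j ∈ range t, ‖PhiR R (s + j + 1) (t - 1 - j) * E (s + j)‖ + ‖E (s + t)‖ :=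
        norm_add₃_le.trans (by gcongr; exact norm_sum_le _ _)
    _ ≤ C * ‖y s‖ + C / (1 - ρ) * Ebar + Ebar := by gcongr; exact hE _ (by omega)
    _ ≤ (1 + C) * ‖y s‖ + (C / (1 - ρ) + 1) * Ebar := by nlinarith [norm_nonneg (y s)]

end Recursion

theorem stmt9_general (N d : ℕ)
    (R : ℕ → Matrix (Fin N) (Fin N) ℝ)
    (hRrow : ∀ k, 1 ≤ k → ∀ i, ∑ j, R k i j = 1)
    (v : ℕ → Fin N → ℝ)
    (hvpos : ∀ k, 1 ≤ k → ∀ i, 0 < v k i)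
    (hvsum : ∀ k, 1 ≤ k → ∑ i, v k i = (N : ℝ))
    (hvrec : ∀ k, 1 ≤ k → ∀ j, v k j = ∑ i, v (k + 1) i * R k i j)
    (C₁ ρ : ℝ) (hC₁ : 0 < C₁) (hρ : ρ ∈ Set.Ioo (0 : ℝ) 1)
    (hgeo : ∀ s k, 1 ≤ s → s ≤ k →
      frobNorm (fun i j => PhiR R s (k - s) i j - (1 / (N : ℝ)) * v s j)
        ≤ C₁ * ρ ^ (k - s))
    (w : ℕ → Matrix (Fin N) (Fin d) ℝ) (δ : ℕ → Matrix (Fin N) (Fin d) ℝ)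
    (hrec : ∀ k, 1 ≤ k → w (k + 1) = R k * w k + δ k)
    (Ctil : ℝ) (hδ : ∀ k, 1 ≤ k → frobNorm (δ k) ≤ Ctil)
    (D : ℝ)
    (havg : ∀ k, 1 ≤ k →
      vecNorm (fun c => (1 / (N : ℝ)) * ∑ i, v k i * w k i c) ≤ D) :
    ∃ M : ℝ, 0 < M ∧ ∀ k, 1 ≤ k → frobNorm (w k) ≤ M := by
  obtain ⟨hρ0, hρ1⟩ := hρ
  set Q : ℕ → Matrix (Fin N) (Fin N) ℝ := fun k => avgMat (v k)
  set y : ℕ → Matrix (Fin N) (Fin d) ℝ := fun k => w k - Q k * w k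
  set E : ℕ → Matrix (Fin N) (Fin d) ℝ := fun k => δ k - Q (k + 1) * δ k
  have hPhi : ∀ a m, 1 ≤ a → ‖PhiR R a m - Q a‖ ≤ C₁ * ρ ^ m := fun a m ha => by
    have h := hgeo a (a + m) ha (Nat.le_add_right a m)
    rw [Nat.add_sub_cancel_left] at h
    rwa [← frobNorm_eq_norm]
  have hy : ∀ k, 1 ≤ k → y (k + 1) = R k * y k + E k := fun k hk => by
    simp only [y, E, hrec k hk]
    exact sub_mul_self_of_recursion _ _ _ _ _ (mul_avgMat_of_sum_row_eq_one (hRrow k hk))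
      (avgMat_mul_of_eq_vecMul (hvrec k hk))
  have hE : ∀ k, 1 ≤ k → ‖E k‖ ≤ (1 + √N) * Ctil := fun k hk =>
    (norm_sub_avgMat_mul_le (fun i => (hvpos _ (by omega) i).le) (hvsum _ (by omega)) _).trans
      (by gcongr; rw [← frobNorm_eq_norm]; exact hδ k hk)
  have hyb := norm_le_of_recursion R y E 1 Q hC₁.le hρ0.le hρ1 hPhi hy
    (avgMat_mul_sub_self (hvsum 1 le_rfl) _)
    (fun k hk => avgMat_mul_sub_self (hvsum (k + 1) (by omega)) _) hE
  refine ⟨max 1 ((1 + C₁) * ‖y 1‖ + (C₁ / (1 - ρ) + 1) * ((1 + √N) * Ctil) + √N * D),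
    by positivity, fun k hk => ?_⟩
  rw [frobNorm_eq_norm]
  calc ‖w k‖ ≤ ‖y k‖ + ‖Q k * w k‖ := norm_le_norm_sub_add (w k) (Q k * w k)
    _ ≤ _ := add_le_add (hyb k hk) (by rw [norm_avgMat_mul]; gcongr; exact havg k hk)
    _ ≤ _ := le_max_right _ _

/-- Let {R_k}_{k≥1} be N×N row-stochastic matrices, {v_k}_{k≥1}
strictly positive vectors with ∑_i (v_k)_i = N and v_kᵀ = v_{k+1}ᵀ R_k; suppose
‖Φ_R(k,s) − (1/N) 1_N v_sᵀ‖ ≤ C₁ ρ^{k−s} (Frobenius norm). Let s^{k+1} = R_k s^k + δ^k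
with ‖δ^k‖ ≤ C̃, and ‖(1/N) v_kᵀ s^k‖ ≤ D. Then there is M > 0 with ‖s^k‖ ≤ M for all
k ≥ 1. -/
theorem stmt9 (N d : ℕ) (hN : 1 ≤ N) (hd : 1 ≤ d)
    (R : ℕ → Matrix (Fin N) (Fin N) ℝ)
    (hRnn : ∀ k, 1 ≤ k → ∀ i j, 0 ≤ R k i j)
    (hRrow : ∀ k, 1 ≤ k → ∀ i, ∑ j, R k i j = 1)
    (v : ℕ → Fin N → ℝ)
    (hvpos : ∀ k, 1 ≤ k → ∀ i, 0 < v k i)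
    (hvsum : ∀ k, 1 ≤ k → ∑ i, v k i = (N : ℝ))
    (hvrec : ∀ k, 1 ≤ k → ∀ j, v k j = ∑ i, v (k + 1) i * R k i j)
    (C₁ ρ : ℝ) (hC₁ : 0 < C₁) (hρ : ρ ∈ Set.Ioo (0 : ℝ) 1)
    (hgeo : ∀ s k, 1 ≤ s → s ≤ k →
      frobNorm (fun i j => PhiR R s (k - s) i j - (1 / (N : ℝ)) * v s j)
        ≤ C₁ * ρ ^ (k - s))
    (w : ℕ → Matrix (Fin N) (Fin d) ℝ) (δ : ℕ → Matrix (Fin N) (Fin d) ℝ)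
    (hrec : ∀ k, 1 ≤ k → w (k + 1) = R k * w k + δ k)
    (Ctil : ℝ) (hδ : ∀ k, 1 ≤ k → frobNorm (δ k) ≤ Ctil)
    (D : ℝ)
    (havg : ∀ k, 1 ≤ k →
      vecNorm (fun c => (1 / (N : ℝ)) * ∑ i, v k i * w k i c) ≤ D) :
    ∃ M : ℝ, 0 < M ∧ ∀ k, 1 ≤ k → frobNorm (w k) ≤ M :=
  stmt9_general N d R hRrow v hvpos hvsum hvrec C₁ ρ hC₁ hρ hgeo w δ hrec Ctil hδ D havg
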